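/- Under the standing assumptions (A1)–(A2), one has Ψ = Π^{J,I∩J}; in particular Π^{J,I∩J} ∪ Π_{I∩J} is a basis of V_J. -/

import Mathlib

open scoped Classical Pointwise

noncomputable section

namespace CoxeterCentralizer

/-- The geometric representation space `V`: formal `ℝ`-linear combinations of
the simple roots `α_s`, `s ∈ S`. -/
abbrev GV (S : Type*) := S →₀ ℝ

variable {S W : Type*} [Group W]

/-- The simple root `α_s`. -/
def alpha (s : S) : GV S := Finsupp.single s 1

/-- The value `⟨α_s, α_t⟩ = - cos (π / m(s,t))` of the bilinear form on simple roots
(`m(s,t) = 0` encodes `m(s,t) = ∞`, where the value is `-1`). -/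
def cform (M : CoxeterMatrix S) (s t : S) : ℝ :=
  if M s t = 0 then -1 else -Real.cos (Real.pi / (M s t : ℝ))

/-- The symmetric bilinear form `⟨·,·⟩` on the geometric representation space. -/
def form (M : CoxeterMatrix S) (v w : GV S) : ℝ :=
  v.sum fun s a => w.sum fun t b => a * b * cform M s t

/-- The property that a given action of `W` on `V` is the standard geometric
representation: each simple reflection acts by `s • v = v - 2⟨α_s, v⟩ α_s`. -/
def GeomAction (M : CoxeterMatrix S) (cs : CoxeterSystem M W) [MulAction W (GV S)] : Prop :=
  ∀ (s : S) (v : GV S), cs.simple s • v = v - (2 * form M (alpha s) v) • alpha s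

/-- The root system `Φ = W · Π`. -/
def Phi (M : CoxeterMatrix S) (cs : CoxeterSystem M W) [MulAction W (GV S)] : Set (GV S) :=
  {v | ∃ (w : W) (s : S), v = w • alpha s}

/-- The set of positive roots `Φ⁺ = Φ ∩ ℝ_{≥0} Π`. -/
def PhiPos (M : CoxeterMatrix S) (cs : CoxeterSystem M W) [MulAction W (GV S)] : Set (GV S) :=
  {v ∈ Phi M cs | ∀ s, 0 ≤ v s}

/-- `Φ_J`, the roots supported on `J`. -/
def PhiIn (M : CoxeterMatrix S) (cs : CoxeterSystem M W) [MulAction W (GV S)]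
    (J : Set S) : Set (GV S) :=
  {v ∈ Phi M cs | ∀ s, s ∉ J → v s = 0}

/-- `Φ_J^{⊥K}`, the roots supported on `J` orthogonal to all `α_s`, `s ∈ K`. -/
def PhiPerp (M : CoxeterMatrix S) (cs : CoxeterSystem M W) [MulAction W (GV S)]
    (J K : Set S) : Set (GV S) :=
  {v ∈ PhiIn M cs J | ∀ s ∈ K, form M v (alpha s) = 0}

/-- The reflection `s_γ = w s w⁻¹` along a root `γ = w • α_s`. -/
def sref (M : CoxeterMatrix S) (cs : CoxeterSystem M W) [MulAction W (GV S)]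
    (γ : GV S) : W :=
  if h : ∃ (w : W) (s : S), γ = w • alpha s then
    h.choose * cs.simple h.choose_spec.choose * h.choose⁻¹
  else 1

/-- The (standard) parabolic subgroup `W_I`. -/
def WP (M : CoxeterMatrix S) (cs : CoxeterSystem M W) (I : Set S) : Subgroup W :=
  Subgroup.closure (cs.simple '' I)

/-- `I ⊆ S` is of finite type if `W_I` is finite. -/
def FiniteType (M : CoxeterMatrix S) (cs : CoxeterSystem M W) (I : Set S) : Prop :=
  (WP M cs I : Set W).Finite

/-- Adjacency in the Coxeter graph: `s` and `t` are joined by an edge iff `m(s,t) ≥ 3`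
(including `m(s,t) = ∞`, encoded as `0`). -/
def Adj (M : CoxeterMatrix S) (s t : S) : Prop := 3 ≤ M s t ∨ M s t = 0

/-- `J` is adjacent to `K` if some element of `J` is joined by an edge to some element of `K`. -/
def AdjSets (M : CoxeterMatrix S) (J K : Set S) : Prop := ∃ s ∈ J, ∃ t ∈ K, Adj M s t

/-- `J` is apart from `K` if they are disjoint and not adjacent. -/
def Apart (M : CoxeterMatrix S) (J K : Set S) : Prop := J ∩ K = ∅ ∧ ¬ AdjSets M J K

/-- Connectivity within `C ⊆ S` in the Coxeter graph. -/
def ConnIn (M : CoxeterMatrix S) (C : Set S) (s t : S) : Prop :=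
  Relation.ReflTransGen (fun a b => b ∈ C ∧ Adj M a b) s t

/-- `C ⊆ S` is irreducible: nonempty and its induced Coxeter graph is connected. -/
def IsIrreducible (M : CoxeterMatrix S) (C : Set S) : Prop :=
  C.Nonempty ∧ ∀ s ∈ C, ∀ t ∈ C, ConnIn M C s t

/-- `D` is an irreducible component of `C`: a connected component of the Coxeter
graph induced on `C`. -/
def IsComponent (M : CoxeterMatrix S) (C D : Set S) : Prop :=
  ∃ s ∈ C, D = {t ∈ C | ConnIn M C s t}

/-- The Coxeter matrix of type `A_n` (standard labelling, `0`-indexed). -/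
def AMat (n : ℕ) : Fin n → Fin n → ℕ := fun i j =>
  if i = j then 1 else if i.1 + 1 = j.1 ∨ j.1 + 1 = i.1 then 3 else 2

/-- `C ⊆ S` is of the type given by the labelled Coxeter matrix `A` on `Fin n`. -/
def IsGraphType (M : CoxeterMatrix S) {n : ℕ} (A : Fin n → Fin n → ℕ) (C : Set S) : Prop :=
  ∃ r : Fin n → S, Function.Injective r ∧ C = Set.range r ∧ ∀ i j, M (r i) (r j) = A i j

/-- `I` is `A_{>1}`-free: it has no irreducible component of type `A_n`, `2 ≤ n < ∞`. -/
def AFree (M : CoxeterMatrix S) (I : Set S) : Prop :=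
  ∀ C, IsComponent M I C → ∀ n, 2 ≤ n → ¬ IsGraphType M (AMat n) C

/-- The reflection subgroup `W(Ψ)` generated by the reflections along the roots in `Ψ`. -/
def WRefl (M : CoxeterMatrix S) (cs : CoxeterSystem M W) [MulAction W (GV S)]
    (Ψ : Set (GV S)) : Subgroup W :=
  Subgroup.closure (sref M cs '' Ψ)

/-- The "root system" `W(Ψ) · Ψ` of the reflection subgroup `W(Ψ)`. -/
def orb (M : CoxeterMatrix S) (cs : CoxeterSystem M W) [MulAction W (GV S)]
    (Ψ : Set (GV S)) : Set (GV S) :=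
  {v | ∃ w ∈ WRefl M cs Ψ, ∃ γ ∈ Ψ, v = w • γ}

/-- The positive part `(W(Ψ) · Ψ)⁺` of the root system of `W(Ψ)`. -/
def orbPos (M : CoxeterMatrix S) (cs : CoxeterSystem M W) [MulAction W (GV S)]
    (Ψ : Set (GV S)) : Set (GV S) :=
  {v ∈ orb M cs Ψ | ∀ s, 0 ≤ v s}

/-- The simple system `Π(Ψ)` of the reflection subgroup `W(Ψ)`: those
`γ ∈ (W(Ψ)·Ψ)⁺` such that any expression `γ = Σ c_i • β_i` with `c_i > 0` and
`β_i ∈ (W(Ψ)·Ψ)⁺` forces `β_i = γ` for all `i`. -/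
def simpleSys (M : CoxeterMatrix S) (cs : CoxeterSystem M W) [MulAction W (GV S)]
    (Ψ : Set (GV S)) : Set (GV S) :=
  {γ ∈ orbPos M cs Ψ |
    ∀ (n : ℕ) (c : Fin n → ℝ) (β : Fin n → GV S),
      (∀ i, 0 < c i) → (∀ i, β i ∈ orbPos M cs Ψ) → γ = ∑ i, c i • β i →
      ∀ i, β i = γ}

/-- The simple system `Π^{J,K} = Π(Φ_J^{⊥K})`. -/
def PiPerp (M : CoxeterMatrix S) (cs : CoxeterSystem M W) [MulAction W (GV S)]
    (J K : Set S) : Set (GV S) :=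
  simpleSys M cs (PhiPerp M cs J K)

/-- The simple system `Π^I = Π(Φ^{⊥I})` of `W^{⊥I}`. -/
def PiI (M : CoxeterMatrix S) (cs : CoxeterSystem M W) [MulAction W (GV S)]
    (I : Set S) : Set (GV S) :=
  PiPerp M cs Set.univ I

/-- The subgroup `C_I = {w ∈ W : w • α_s = α_s for all s ∈ I}` (as a set). -/
def CIset (M : CoxeterMatrix S) (cs : CoxeterSystem M W) [MulAction W (GV S)]
    (I : Set S) : Set W :=
  {w : W | ∀ s ∈ I, w • alpha s = alpha s}

/-- The subgroup `Y_I = {w ∈ C_I : w • (Φ^{⊥I})⁺ ⊆ Φ⁺}` (as a set). -/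
def YIset (M : CoxeterMatrix S) (cs : CoxeterSystem M W) [MulAction W (GV S)]
    (I : Set S) : Set W :=
  {w ∈ CIset M cs I |
    ∀ γ ∈ PhiPerp M cs Set.univ I ∩ PhiPos M cs, w • γ ∈ PhiPos M cs}

/-- Adjacency of two simple roots of a reflection subgroup, in the Coxeter graph of the
reflection subgroup: the corresponding reflections do not commute. -/
def RootAdj (M : CoxeterMatrix S) (cs : CoxeterSystem M W) [MulAction W (GV S)]
    (β β' : GV S) : Prop :=
  β ≠ β' ∧ sref M cs β * sref M cs β' ≠ sref M cs β' * sref M cs β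

/-- Connectivity within a set `P` of roots in the Coxeter graph of the reflection
subgroup generated by the reflections along roots in `P`. -/
def RootConnIn (M : CoxeterMatrix S) (cs : CoxeterSystem M W) [MulAction W (GV S)]
    (P : Set (GV S)) (β β' : GV S) : Prop :=
  Relation.ReflTransGen (fun a b => b ∈ P ∧ RootAdj M cs a b) β β'

/-- The irreducible component of the simple system `P` containing the root `β`. -/
def RootComp (M : CoxeterMatrix S) (cs : CoxeterSystem M W) [MulAction W (GV S)]
    (P : Set (GV S)) (β : GV S) : Set (GV S) :=
  {β' ∈ P | RootConnIn M cs P β β'}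

/-- `C` is an irreducible component of the simple system `P`. -/
def IsRootComponent (M : CoxeterMatrix S) (cs : CoxeterSystem M W) [MulAction W (GV S)]
    (P C : Set (GV S)) : Prop :=
  ∃ β ∈ P, C = RootComp M cs P β

/-- The finite part `W^{⊥I}_fin` of the Coxeter system `(W^{⊥I}, R^I)`:
the subgroup generated by the finite irreducible components of `W^{⊥I}`. -/
def PerpFin (M : CoxeterMatrix S) (cs : CoxeterSystem M W) [MulAction W (GV S)]
    (I : Set S) : Subgroup W :=
  Subgroup.closure (sref M cs ''
    {β ∈ PiI M cs I | ((WRefl M cs (RootComp M cs (PiI M cs I) β) : Set W)).Finite})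

/-- The infinite part `W^{⊥I}_inf` of the Coxeter system `(W^{⊥I}, R^I)`:
the subgroup generated by the infinite irreducible components of `W^{⊥I}`. -/
def PerpInf (M : CoxeterMatrix S) (cs : CoxeterSystem M W) [MulAction W (GV S)]
    (I : Set S) : Subgroup W :=
  Subgroup.closure (sref M cs ''
    {β ∈ PiI M cs I | ¬ ((WRefl M cs (RootComp M cs (PiI M cs I) β) : Set W)).Finite})

/-- `Π_J`, the set of simple roots with index in `J`. -/
def alphaSet (J : Set S) : Set (GV S) := alpha '' J

/-- `P` is a basis of the span of `T`. -/
def IsBasisOfSpan (P T : Set (GV S)) : Prop :=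
  LinearIndependent ℝ (fun v : ↥P => (v : GV S)) ∧
    Submodule.span ℝ P = Submodule.span ℝ T

/-- The longest element `w_0(L)` of a finite parabolic subgroup `W_L`. -/
def w0 (M : CoxeterMatrix S) (cs : CoxeterSystem M W) (L : Set S) : W :=
  if h : ∃ w ∈ WP M cs L, ∀ u ∈ WP M cs L, cs.length u ≤ cs.length w then h.choose else 1

/-- `J_{∼K}`: the set of elements of `J ∪ K` lying in the same connected component of the
Coxeter graph induced on `J ∪ K` as some element of `K`. -/
def sTilde (M : CoxeterMatrix S) (J K : Set S) : Set S :=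
  {s ∈ J ∪ K | ∃ t ∈ K, ConnIn M (J ∪ K) t s}

/-- `S^{(Λ)}`: the set of injective maps (duplicate-free `Λ`-tuples) `Λ → S`. -/
def SInj (S Λ : Type*) := {x : Λ → S // Function.Injective x}

/-- `[x]`: the image of the tuple `x ∈ S^{(Λ)}`. -/
def rng {S Λ : Type*} (x : SInj S Λ) : Set S := Set.range x.1

/-- `C_{x,y} = {w ∈ W : α_{x_λ} = w • α_{y_λ} for all λ}`. -/
def Cpair (M : CoxeterMatrix S) (cs : CoxeterSystem M W) [MulAction W (GV S)]
    {Λ : Type*} (x y : SInj S Λ) : Set W :=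
  {w : W | ∀ l : Λ, w • alpha (y.1 l) = alpha (x.1 l)}

/-- `Y_{x,y} = {w ∈ C_{x,y} : w • (Φ^{⊥[y]})⁺ ⊆ Φ⁺}`. -/
def Ypair (M : CoxeterMatrix S) (cs : CoxeterSystem M W) [MulAction W (GV S)]
    {Λ : Type*} (x y : SInj S Λ) : Set W :=
  {w ∈ Cpair M cs x y |
    ∀ γ ∈ PhiPerp M cs Set.univ (rng y) ∩ PhiPos M cs, w • γ ∈ PhiPos M cs}

/-- A semi-standard decomposition `u = ω_{n-1} ⋯ ω_1 ω_0` of an element `u ∈ Y_{z,y}`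
with respect to `J ⊆ S`, with data `y^{(i)}`, `t^{(i)}`, `J^{(i)}`, supports
`K^{(i)} = ([y^{(i)}] ∪ J^{(i)})_{∼ t^{(i)}}` and
`ω_i = w_0(K^{(i)}) w_0(K^{(i)} ∖ {t^{(i)}})`. -/
structure SemiStd {S W : Type*} [Group W] (M : CoxeterMatrix S) (cs : CoxeterSystem M W)
    [MulAction W (GV S)] (Λ : Type*) (u : W) (y z : SInj S Λ) (J : Set S) where
  n : ℕ
  ys : Fin (n + 1) → SInj S Λ
  ts : Fin n → S
  Js : Fin (n + 1) → Set S
  Ks : Fin n → Set S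
  om : Fin n → W
  h_y0 : ys 0 = y
  h_yn : ys (Fin.last n) = z
  h_J0 : Js 0 = J
  h_K : ∀ i, Ks i = sTilde M (rng (ys i.castSucc) ∪ Js i.castSucc) {ts i}
  h_om : ∀ i, om i = w0 M cs (Ks i) * w0 M cs (Ks i \ {ts i})
  h_t_notin : ∀ i, ts i ∉ rng (ys i.castSucc) ∪ Js i.castSucc
  h_t_adj : ∀ i, AdjSets M {ts i} (rng (ys i.castSucc))
  h_K_fin : ∀ i, FiniteType M cs (Ks i)
  h_Y : ∀ i, om i ∈ Ypair M cs (ys i.succ) (ys i.castSucc)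
  h_J_map : ∀ i, (fun v => om i • v) '' alphaSet (Js i.castSucc) = alphaSet (Js i.succ)
  h_prod : u = (List.ofFn om).reverse.prod

variable {Λ : Type*} {M : CoxeterMatrix S} {cs : CoxeterSystem M W} [MulAction W (GV S)]

/-- `ω_i` is a wide transformation: its support intersects `J^{(i)} ∖ [y^{(i)}]`. -/
def SemiStd.Wide {u : W} {y z : SInj S Λ} {J : Set S} (D : SemiStd M cs Λ u y z J)
    (i : Fin D.n) : Prop :=
  (D.Ks i ∩ (D.Js i.castSucc \ rng (D.ys i.castSucc))).Nonempty

/-- A semi-standard decomposition is standard if the lengths add up: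
`ℓ(u) = Σ_j ℓ(ω_j)`. -/
def SemiStd.IsStd {u : W} {y z : SInj S Λ} {J : Set S} (D : SemiStd M cs Λ u y z J) : Prop :=
  cs.length u = ∑ i : Fin D.n, cs.length (D.om i)

/-! A root of `Π^I` supported on `J` is simple for `Φ_J^{⊥I}`, and conversely, because every root
in a positive decomposition of a root supported on `J` is again supported on `J`; as `I ∖ J` is not
adjacent to `J`, moreover `Φ_J^{⊥I} = Φ_J^{⊥(I∩J)}`. Hence `Π^{J,I∩J} = Π^I ∩ V_J`, which contains
`Ψ`. A root of `Π^I ∩ V_J` outside `Ψ` lies in other components of `Π^I`, so its reflection commutes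
with those along `Ψ`, which for positive roots forces orthogonality. Being also orthogonal to
`Π_{I∩J}`, it is orthogonal to all of `V_J = span (Ψ ∪ Π_{I∩J})`, contradicting `⟨β, β⟩ = 1`. -/

lemma cform_self (M : CoxeterMatrix S) (s : S) : cform M s s = 1 := by
  simp [cform, Real.cos_pi]

lemma cform_comm (M : CoxeterMatrix S) (s t : S) : cform M s t = cform M t s := by
  simp [cform, M.isSymm.apply t s]

lemma cform_eq_zero_of_not_adj (M : CoxeterMatrix S) {s t : S} (hne : s ≠ t)
    (hadj : ¬ Adj M s t) : cform M s t = 0 := by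
  have h2 : M s t = 2 := by
    have := M.off_diagonal s t hne
    unfold Adj at hadj
    omega
  rw [cform, if_neg (by omega), h2]
  norm_num [Real.cos_pi_div_two]

lemma form_add_right (M : CoxeterMatrix S) (v w₁ w₂ : GV S) :
    form M v (w₁ + w₂) = form M v w₁ + form M v w₂ := by
  unfold form
  rw [← Finsupp.sum_add]
  refine Finsupp.sum_congr fun s _ => ?_
  rw [Finsupp.sum_add_index'] <;> intros <;> ring

lemma form_smul_right (M : CoxeterMatrix S) (a : ℝ) (v w : GV S) :
    form M v (a • w) = a * form M v w := by
  unfold form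
  rw [Finsupp.mul_sum]
  refine Finsupp.sum_congr fun s _ => ?_
  rw [Finsupp.sum_smul_index, Finsupp.mul_sum]
  · exact Finsupp.sum_congr fun _ _ => by ring
  · intros; ring

lemma form_comm (M : CoxeterMatrix S) (v w : GV S) : form M v w = form M w v := by
  unfold form
  rw [Finsupp.sum_comm]
  refine Finsupp.sum_congr fun s _ => Finsupp.sum_congr fun t _ => ?_
  rw [cform_comm]; ring

def formₗ (M : CoxeterMatrix S) : GV S →ₗ[ℝ] GV S →ₗ[ℝ] ℝ :=
  LinearMap.mk₂ ℝ (form M)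
    (fun v₁ v₂ w => by rw [form_comm, form_add_right, form_comm M w, form_comm M w])
    (fun a v w => by rw [form_comm, form_smul_right, form_comm, smul_eq_mul])
    (form_add_right M) (form_smul_right M)

lemma formₗ_apply (v w : GV S) : formₗ M v w = form M v w := rfl

lemma form_sub_left (M : CoxeterMatrix S) (v₁ v₂ w : GV S) :
    form M (v₁ - v₂) w = form M v₁ w - form M v₂ w :=
  LinearMap.map_sub₂ (formₗ M) v₁ v₂ w

lemma form_sub_right (M : CoxeterMatrix S) (v w₁ w₂ : GV S) :
    form M v (w₁ - w₂) = form M v w₁ - form M v w₂ :=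
  map_sub (formₗ M v) w₁ w₂

lemma form_smul_left (M : CoxeterMatrix S) (a : ℝ) (v w : GV S) :
    form M (a • v) w = a * form M v w :=
  LinearMap.map_smul₂ (formₗ M) a v w

lemma form_alpha_alpha (M : CoxeterMatrix S) (s t : S) :
    form M (alpha s) (alpha t) = cform M s t := by
  unfold form alpha
  rw [Finsupp.sum_single_index, Finsupp.sum_single_index] <;> simp

lemma form_eq_zero_of_mem_span {T : Set (GV S)} {γ x : GV S}
    (hT : ∀ v ∈ T, form M γ v = 0) (hx : x ∈ Submodule.span ℝ T) : form M γ x = 0 :=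
  (Submodule.span_le (p := LinearMap.ker (formₗ M γ))).mpr hT hx

lemma span_alphaSet (J : Set S) :
    Submodule.span ℝ (alphaSet J) = Finsupp.supported ℝ ℝ J :=
  (Finsupp.supported_eq_span_single ℝ J).symm

lemma form_alpha_eq_zero_of_mem_supported {J : Set S} {v : GV S}
    (hv : v ∈ Finsupp.supported ℝ ℝ J) {t : S} (htJ : t ∉ J) (hadj : ∀ s ∈ J, ¬ Adj M t s) :
    form M v (alpha t) = 0 := by
  rw [← span_alphaSet] at hv
  refine (Submodule.span_le (p := LinearMap.ker ((formₗ M).flip (alpha t)))).mpr ?_ hv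
  rintro _ ⟨s, hs, rfl⟩
  have hne : t ≠ s := fun h => htJ (h ▸ hs)
  simp only [SetLike.mem_coe, LinearMap.mem_ker, LinearMap.flip_apply, formₗ_apply,
    form_alpha_alpha, cform_comm M s, cform_eq_zero_of_not_adj M hne (hadj s hs)]

def perpSpace (M : CoxeterMatrix S) (K : Set S) : Submodule ℝ (GV S) :=
  ⨅ t ∈ K, LinearMap.ker ((formₗ M).flip (alpha t))

lemma mem_perpSpace {K : Set S} {v : GV S} :
    v ∈ perpSpace M K ↔ ∀ t ∈ K, form M v (alpha t) = 0 := by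
  simp [perpSpace, Submodule.mem_iInf, formₗ_apply]

lemma mem_PhiPerp {J K : Set S} {v : GV S} :
    v ∈ PhiPerp M cs J K ↔
      v ∈ Phi M cs ∧ v ∈ Finsupp.supported ℝ ℝ J ∧ v ∈ perpSpace M K := by
  simp only [PhiPerp, PhiIn, Set.mem_ofPred_eq, Finsupp.mem_supported', mem_perpSpace, and_assoc]

lemma PhiPerp_univ_inter_supported (J K : Set S) :
    PhiPerp M cs Set.univ K ∩ Finsupp.supported ℝ ℝ J = PhiPerp M cs J K := by
  ext v
  simp only [Set.mem_inter_iff, mem_PhiPerp, Finsupp.supported_univ, Submodule.mem_top,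
    SetLike.mem_coe, true_and]
  tauto

lemma PhiPerp_inter_eq {I J : Set S} (hJadj : ¬ AdjSets M (I \ J) J) :
    PhiPerp M cs J (I ∩ J) = PhiPerp M cs J I := by
  ext v
  simp only [mem_PhiPerp, mem_perpSpace, and_congr_right_iff]
  refine fun _ hv => ⟨fun h t ht => ?_, fun h t ht => h t ht.1⟩
  by_cases htJ : t ∈ J
  · exact h t ⟨ht, htJ⟩
  · exact form_alpha_eq_zero_of_mem_supported hv htJ fun s hs hadj =>
      hJadj ⟨t, ⟨ht, htJ⟩, s, hs, hadj⟩

lemma smul_mem_Phi {v : GV S} (hv : v ∈ Phi M cs) (w : W) : w • v ∈ Phi M cs := by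
  obtain ⟨u, s, rfl⟩ := hv
  exact ⟨w * u, s, (mul_smul w u (alpha s)).symm⟩

lemma GeomAction.smul_smul_add (hact : GeomAction M cs) (w : W) (a : ℝ) (u v : GV S) :
    w • (a • u + v) = a • (w • u) + w • v := by
  have hw : w ∈ Subgroup.closure (Set.range cs.simple) := by
    rw [cs.subgroup_closure_range_simple]; trivial
  induction hw using Subgroup.closure_induction generalizing a u v with
  | mem _ hs =>
    obtain ⟨s, rfl⟩ := hs
    rw [hact, hact, hact, form_add_right, form_smul_right]
    module
  | one => simp only [one_smul]
  | mul x y _ _ ihx ihy => rw [mul_smul, ihy, ihx, mul_smul, mul_smul]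
  | inv x _ ih =>
    have h := ih a (x⁻¹ • u) (x⁻¹ • v)
    rw [smul_inv_smul, smul_inv_smul] at h
    rw [← h, inv_smul_smul]

def GeomAction.linearMap (hact : GeomAction M cs) (w : W) : GV S →ₗ[ℝ] GV S where
  toFun v := w • v
  map_add' u v := by simpa using hact.smul_smul_add w 1 u v
  map_smul' a u := by
    have h0 : w • (0 : GV S) = 0 := by simpa using hact.smul_smul_add w 1 0 0
    simpa [h0] using hact.smul_smul_add w a u 0

lemma GeomAction.linearMap_apply (hact : GeomAction M cs) (w : W) (v : GV S) :
    hact.linearMap w v = w • v := rfl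

lemma GeomAction.form_smul_smul (hact : GeomAction M cs) (w : W) (u v : GV S) :
    form M (w • u) (w • v) = form M u v := by
  have hw : w ∈ Subgroup.closure (Set.range cs.simple) := by
    rw [cs.subgroup_closure_range_simple]; trivial
  induction hw using Subgroup.closure_induction generalizing u v with
  | mem _ hs =>
    obtain ⟨s, rfl⟩ := hs
    rw [hact, hact]
    simp only [form_sub_left, form_sub_right, form_smul_left, form_smul_right,
      form_alpha_alpha, cform_self, form_comm M u (alpha s)]
    ring
  | one => simp only [one_smul]
  | mul x y _ _ ihx ihy => rw [mul_smul, mul_smul, ihx, ihy]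
  | inv x _ ih =>
    have h := ih (x⁻¹ • u) (x⁻¹ • v)
    rw [smul_inv_smul, smul_inv_smul] at h
    exact h.symm

lemma GeomAction.form_self_eq_one (hact : GeomAction M cs) {γ : GV S} (hγ : γ ∈ Phi M cs) :
    form M γ γ = 1 := by
  obtain ⟨w, s, rfl⟩ := hγ
  rw [hact.form_smul_smul, form_alpha_alpha, cform_self]

lemma sref_spec {γ : GV S} (hγ : γ ∈ Phi M cs) :
    ∃ (u : W) (s : S), γ = u • alpha s ∧ sref M cs γ = u * cs.simple s * u⁻¹ :=
  ⟨hγ.choose, hγ.choose_spec.choose, hγ.choose_spec.choose_spec, dif_pos hγ⟩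

lemma GeomAction.sref_smul (hact : GeomAction M cs) {γ : GV S} (hγ : γ ∈ Phi M cs) (v : GV S) :
    sref M cs γ • v = v - (2 * form M γ v) • γ := by
  obtain ⟨u, s, rfl, hs⟩ := sref_spec hγ
  have hform : form M (u • alpha s) v = form M (alpha s) (u⁻¹ • v) := by
    rw [← hact.form_smul_smul u (alpha s), smul_inv_smul]
  rw [hs, mul_smul, mul_smul, hact, ← hact.linearMap_apply u (_ - _), map_sub,
    LinearMap.map_smul, hact.linearMap_apply, hact.linearMap_apply, smul_inv_smul, hform]

lemma sref_mul_self {γ : GV S} (hγ : γ ∈ Phi M cs) : sref M cs γ * sref M cs γ = 1 := by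
  obtain ⟨u, s, -, hs⟩ := sref_spec hγ
  rw [hs, show u * cs.simple s * u⁻¹ * (u * cs.simple s * u⁻¹)
    = u * (cs.simple s * cs.simple s) * u⁻¹ by group, cs.simple_mul_simple_self]
  group

/-- Reflections along roots in `X` map `X` into itself, so `W(A)` stabilises `X`. -/
lemma GeomAction.orb_subset_inter (hact : GeomAction M cs) (X : Submodule ℝ (GV S))
    {A : Set (GV S)} (hA : A ⊆ Phi M cs ∩ X) : orb M cs A ⊆ Phi M cs ∩ X := by
  rintro _ ⟨g, hg, δ, hδ, rfl⟩
  refine ⟨smul_mem_Phi (hA hδ).1 g, ?_⟩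
  have hstab : WRefl M cs A ≤ MulAction.stabilizer W (X : Set (GV S)) := by
    refine (Subgroup.closure_le _).mpr ?_
    rintro _ ⟨β, hβ, rfl⟩
    have hsub : sref M cs β • (X : Set (GV S)) ⊆ X := Set.smul_set_subset_iff.mpr fun v hv => by
      rw [SetLike.mem_coe, hact.sref_smul (hA hβ).1]
      exact X.sub_mem hv (X.smul_mem _ (hA hβ).2)
    refine hsub.antisymm fun v hv => ⟨sref M cs β • v, hsub (Set.smul_mem_smul_set hv), ?_⟩
    simp only [← mul_smul, sref_mul_self (hA hβ).1, one_smul]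
  rw [← MulAction.mem_stabilizer_iff.mp (hstab hg)]
  exact Set.smul_mem_smul_set (hA hδ).2

lemma mem_orb_self {A : Set (GV S)} {γ : GV S} (h : γ ∈ A) : γ ∈ orb M cs A :=
  ⟨1, one_mem _, γ, h, (one_smul W γ).symm⟩

lemma GeomAction.orb_PhiPerp (hact : GeomAction M cs) (J K : Set S) :
    orb M cs (PhiPerp M cs J K) = PhiPerp M cs J K := by
  refine subset_antisymm ?_ fun v => mem_orb_self
  have hsub : PhiPerp M cs J K ⊆
      Phi M cs ∩ (Finsupp.supported ℝ ℝ J ⊓ perpSpace M K : Submodule ℝ (GV S)) := fun v hv =>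
    have ⟨hΦ, hJ, hK⟩ := mem_PhiPerp.mp hv
    ⟨hΦ, Submodule.mem_inf.mpr ⟨hJ, hK⟩⟩
  exact (hact.orb_subset_inter _ hsub).trans fun v ⟨hΦ, hJK⟩ =>
    mem_PhiPerp.mpr ⟨hΦ, Submodule.mem_inf.mp hJK⟩

lemma GeomAction.mem_orbPos_PhiPerp (hact : GeomAction M cs) {J K : Set S} {v : GV S} :
    v ∈ orbPos M cs (PhiPerp M cs J K) ↔ v ∈ PhiPerp M cs J K ∧ ∀ s, 0 ≤ v s := by
  rw [orbPos, hact.orb_PhiPerp, Set.mem_ofPred_eq]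

lemma orbPos_mono {A B : Set (GV S)} (h : A ⊆ B) : orbPos M cs A ⊆ orbPos M cs B := by
  rintro _ ⟨⟨w, hw, γ, hγ, rfl⟩, hpos⟩
  exact ⟨⟨w, Subgroup.closure_mono (Set.image_mono h) hw, γ, h hγ, rfl⟩, hpos⟩

lemma mem_simpleSys_of_subset {A B : Set (GV S)} (hAB : A ⊆ B) {γ : GV S}
    (hγ : γ ∈ simpleSys M cs B) (hγA : γ ∈ orb M cs A) : γ ∈ simpleSys M cs A :=
  ⟨⟨hγA, hγ.1.2⟩, fun n c β hc hβ h => hγ.2 n c β hc (fun i => orbPos_mono hAB (hβ i)) h⟩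

lemma mem_supported_of_sum_mem_supported {ι : Type*} [Fintype ι] {J : Set S} {c : ι → ℝ}
    {β : ι → GV S} (hc : ∀ i, 0 < c i) (hβ : ∀ i s, 0 ≤ β i s)
    (h : ∑ i, c i • β i ∈ Finsupp.supported ℝ ℝ J) (i : ι) :
    β i ∈ Finsupp.supported ℝ ℝ J := by
  rw [Finsupp.mem_supported'] at h ⊢
  intro s hs
  have hsum : ∑ j, c j * β j s = 0 := by simpa [Finsupp.finsetSum_apply] using h s hs
  have hi := (Finset.sum_eq_zero_iff_of_nonneg fun j _ => mul_nonneg (hc j).le (hβ j s)).mp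
    hsum i (Finset.mem_univ i)
  exact (mul_eq_zero.mp hi).resolve_left (hc i).ne'

lemma GeomAction.PiPerp_eq_PiI_inter (hact : GeomAction M cs) (J K : Set S) :
    PiPerp M cs J K = PiI M cs K ∩ Finsupp.supported ℝ ℝ J := by
  have hJ : PhiPerp M cs J K ⊆ PhiPerp M cs Set.univ K := by
    rw [← PhiPerp_univ_inter_supported J K]; exact Set.inter_subset_left
  ext γ
  constructor
  · intro hγ
    obtain ⟨hγJK, hγpos⟩ := hact.mem_orbPos_PhiPerp.mp hγ.1
    have hγJ := (mem_PhiPerp.mp hγJK).2.1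
    refine ⟨⟨hact.mem_orbPos_PhiPerp.mpr ⟨hJ hγJK, hγpos⟩,
      fun n c β hc hβ hsum => hγ.2 n c β hc (fun i => ?_) hsum⟩, hγJ⟩
    have hβJ := mem_supported_of_sum_mem_supported hc
      (fun j => (hact.mem_orbPos_PhiPerp.mp (hβ j)).2) (hsum ▸ hγJ) i
    obtain ⟨hβK, hβpos⟩ := hact.mem_orbPos_PhiPerp.mp (hβ i)
    rw [hact.mem_orbPos_PhiPerp, ← PhiPerp_univ_inter_supported]
    exact ⟨⟨hβK, hβJ⟩, hβpos⟩
  · rintro ⟨hγ, hγJ⟩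
    refine mem_simpleSys_of_subset hJ hγ ?_
    rw [hact.orb_PhiPerp, ← PhiPerp_univ_inter_supported]
    exact ⟨(hact.mem_orbPos_PhiPerp.mp hγ.1).1, hγJ⟩

lemma GeomAction.eq_smul_of_commute (hact : GeomAction M cs) {β γ : GV S}
    (hβ : β ∈ Phi M cs) (hγ : γ ∈ Phi M cs)
    (hcomm : sref M cs β * sref M cs γ = sref M cs γ * sref M cs β) (h0 : form M β γ ≠ 0) :
    β = form M β γ • γ := by
  have he := congrArg (· • γ) hcomm
  simp only [mul_smul, hact.sref_smul hβ, hact.sref_smul hγ, form_sub_right, form_smul_right,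
    hact.form_self_eq_one hγ, form_comm M γ β] at he
  -- evaluating both sides on `γ` gives `4⟨β,γ⟩ β = 4⟨β,γ⟩² γ`
  refine smul_right_injective _ (mul_ne_zero four_ne_zero h0) ?_
  simp only [smul_smul]
  linear_combination (norm := module) he

lemma GeomAction.eq_of_eq_smul (hact : GeomAction M cs) {β γ : GV S}
    (hβ : β ∈ Phi M cs) (hγ : γ ∈ Phi M cs) (hβpos : ∀ s, 0 ≤ β s) (hγpos : ∀ s, 0 ≤ γ s)
    {c : ℝ} (hc : β = c • γ) : β = γ := by
  have hc2 : c * c = 1 := by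
    have h := hact.form_self_eq_one hβ
    rwa [hc, form_smul_left, form_smul_right, hact.form_self_eq_one hγ, mul_one] at h
  rcases mul_self_eq_one_iff.mp hc2 with rfl | rfl
  · rwa [one_smul] at hc
  · have hγ0 : γ = 0 := by
      ext s
      have := hβpos s
      rw [hc, Finsupp.smul_apply, smul_eq_mul] at this
      rw [Finsupp.coe_zero, Pi.zero_apply]
      linarith [hγpos s]
    have h := hact.form_self_eq_one hγ
    rw [hγ0, ← formₗ_apply, map_zero] at h
    exact absurd h zero_ne_one

lemma GeomAction.form_eq_zero_of_commute (hact : GeomAction M cs) {β γ : GV S}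
    (hβ : β ∈ Phi M cs) (hγ : γ ∈ Phi M cs) (hβpos : ∀ s, 0 ≤ β s) (hγpos : ∀ s, 0 ≤ γ s)
    (hne : β ≠ γ) (hcomm : sref M cs β * sref M cs γ = sref M cs γ * sref M cs β) :
    form M β γ = 0 := by
  by_contra h0
  exact hne (hact.eq_of_eq_smul hβ hγ hβpos hγpos (hact.eq_smul_of_commute hβ hγ hcomm h0))

lemma GeomAction.form_eq_zero_of_not_mem_RootComp (hact : GeomAction M cs) {P : Set (GV S)}
    (hP : ∀ β ∈ P, β ∈ Phi M cs ∧ ∀ s, 0 ≤ β s) {β₀ β β' : GV S}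
    (hβ : β ∈ RootComp M cs P β₀) (hβ' : β' ∈ P) (hβ'C : β' ∉ RootComp M cs P β₀) :
    form M β β' = 0 := by
  have hne : β ≠ β' := by rintro rfl; exact hβ'C hβ
  refine hact.form_eq_zero_of_commute (hP β hβ.1).1 (hP β' hβ').1 (hP β hβ.1).2 (hP β' hβ').2
    hne (not_not.mp fun hcomm => hβ'C ⟨hβ', hβ.2.tail ⟨hβ', hne, hcomm⟩⟩)

theorem Psi_eq_PiPerp_general {S W : Type*} [Group W] (M : CoxeterMatrix S)
    (cs : CoxeterSystem M W) [MulAction W (GV S)] (hact : GeomAction M cs)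
    (I : Set S)
    (w : W)
    (γ : GV S)
    (Ψ : Set (GV S))
    (hΨ : Ψ = {β | ∃ k : ℤ, β ∈ RootComp M cs (PiI M cs I) ((w ^ k) • γ)})
    (J : Set S)
    (hJadj : ¬ AdjSets M (I \ J) J)
    (hbasis : IsBasisOfSpan (Ψ ∪ alphaSet (I ∩ J)) (alphaSet J))
    :
    Ψ = PiPerp M cs J (I ∩ J) ∧
    IsBasisOfSpan (PiPerp M cs J (I ∩ J) ∪ alphaSet (I ∩ J)) (alphaSet J) := by
  have hVJ : Submodule.span ℝ (Ψ ∪ alphaSet (I ∩ J)) = Finsupp.supported ℝ ℝ J := by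
    rw [hbasis.2, span_alphaSet]
  have hPiPerp : PiPerp M cs J (I ∩ J) = PiI M cs I ∩ Finsupp.supported ℝ ℝ J := by
    rw [PiPerp, PhiPerp_inter_eq hJadj, ← PiPerp, hact.PiPerp_eq_PiI_inter]
  have hPiI : ∀ β ∈ PiI M cs I, β ∈ Phi M cs ∧ ∀ s, 0 ≤ β s := fun β hβ =>
    have h := hact.mem_orbPos_PhiPerp.mp hβ.1
    ⟨(mem_PhiPerp.mp h.1).1, h.2⟩
  have hΨsub : Ψ ⊆ PiPerp M cs J (I ∩ J) := fun β hβ => by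
    obtain ⟨k, hk⟩ := hΨ ▸ hβ
    exact hPiPerp ▸ ⟨hk.1, hVJ ▸ Submodule.subset_span (Or.inl hβ)⟩
  have hsubΨ : PiPerp M cs J (I ∩ J) ⊆ Ψ := fun β hβ => by
    by_contra hβΨ
    have hβperp := (mem_PhiPerp.mp (hact.mem_orbPos_PhiPerp.mp hβ.1).1).2.2
    have hβI := (hPiPerp ▸ hβ : β ∈ PiI M cs I ∩ _)
    have horth : ∀ v ∈ Ψ ∪ alphaSet (I ∩ J), form M β v = 0 := by
      rintro v (hv | ⟨t, ht, rfl⟩)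
      · obtain ⟨k, hk⟩ := hΨ ▸ hv
        rw [form_comm]
        exact hact.form_eq_zero_of_not_mem_RootComp hPiI hk hβI.1
          fun hβk => hβΨ (hΨ ▸ ⟨k, hβk⟩)
      · exact mem_perpSpace.mp hβperp t ht
    have hββ := form_eq_zero_of_mem_span horth (hVJ ▸ hβI.2)
    rw [hact.form_self_eq_one (hPiI β hβI.1).1] at hββ
    exact one_ne_zero hββ
  have hΨeq : Ψ = PiPerp M cs J (I ∩ J) := hΨsub.antisymm hsubΨ
  exact ⟨hΨeq, hΨeq ▸ hbasis⟩

/-- Under the standing assumptions (A1)–(A2), one has `Ψ = Π^{J, I∩J}`; in particular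
`Π^{J,I∩J} ∪ Π_{I∩J}` is a basis of `V_J`. -/
theorem Psi_eq_PiPerp {S W : Type*} [Group W] (M : CoxeterMatrix S)
    (cs : CoxeterSystem M W) [MulAction W (GV S)] (hact : GeomAction M cs)
    (I : Set S) (hA1 : ∀ C, IsComponent M I C → FiniteType M cs C)
    (w : W) (hw : w ∈ YIset M cs I)
    (γ : GV S) (hγ : γ ∈ PiI M cs I) (hγfin : sref M cs γ ∈ PerpFin M cs I)
    (Ψ : Set (GV S))
    (hΨ : Ψ = {β | ∃ k : ℤ, β ∈ RootComp M cs (PiI M cs I) ((w ^ k) • γ)})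
    (J : Set S) (hJfin : FiniteType M cs J)
    (hJadj : ¬ AdjSets M (I \ J) J)
    (hbasis : IsBasisOfSpan (Ψ ∪ alphaSet (I ∩ J)) (alphaSet J))
    :
    Ψ = PiPerp M cs J (I ∩ J) ∧
    IsBasisOfSpan (PiPerp M cs J (I ∩ J) ∪ alphaSet (I ∩ J)) (alphaSet J) :=
  Psi_eq_PiPerp_general M cs hact I w γ Ψ hΨ J hJadj hbasis

end CoxeterCentralizer
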